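/- arXiv:1911.04867 — 3 statements merged into one kernel-verified Lean document; each statement's English description precedes it below -/
import Mathlib

section
/- Let (X,G) be a G-metric space with a convex structure W, and let T : X → X be a mapping having a fixed point u (Tu = u) such that G(Tx,Ty,Tz) ≤ a·G(x,y,z) + b·G(x,Tx,Tx) + c·G(y,Ty,Ty) + d·G(z,Tz,Tz) for all x,y,z ∈ X, where a,b,c,d are nonnegative real numbers with a + 3b < 1. Let (α_n) be a sequence in [0,1] with ∑_{n=0}^∞ α_n = ∞, let x_0 ∈ X, and define the Mann iterative process x_{n+1} = W(x_n, T x_n; 1−α_n, α_n). Then G(x_n, u, u) → 0 as n → ∞, i.e. (x_n) converges strongly to the fixed point u of T. -/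
open Filter Topology

/-- A G-metric on a set `X` (Mustafa–Sims). The symmetry axiom (G5) is recorded via
the two generating permutations (swap of last two arguments and a cyclic shift),
from which all six equalities of (G5) follow. -/
structure GMetricStruct (X : Type*) where
  G : X → X → X → ℝ
  nonneg : ∀ x y z, 0 ≤ G x y z
  eq_zero_of_eq : ∀ x y z, x = y → y = z → G x y z = 0
  pos_of_ne : ∀ x y, x ≠ y → 0 < G x x y
  le_of_ne : ∀ x y z, z ≠ y → G x x y ≤ G x y z
  symm_swap : ∀ x y z, G x y z = G x z y
  symm_cycle : ∀ x y z, G x y z = G y z x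
  rect : ∀ x y z a, G x y z ≤ G x a a + G a y z

/-- A convex structure `W` on a G-metric space `(X, G)`:
for all `x, y, u, v` and `λ, β ∈ [0,1]` with `λ + β = 1`,
`G(W(x,y;λ,β), u, v) ≤ λ·G(x,u,v) + β·G(y,u,v)`. -/
def IsConvexStructure {X : Type*} (GM : GMetricStruct X) (W : X → X → ℝ → ℝ → X) : Prop :=
  ∀ x y u v : X, ∀ lam beta : ℝ, lam ∈ Set.Icc (0:ℝ) 1 → beta ∈ Set.Icc (0:ℝ) 1 →
    lam + beta = 1 →
    GM.G (W x y lam beta) u v ≤ lam * GM.G x u v + beta * GM.G y u v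

/-!
The fixed point `u` kills the `c`- and `d`-terms of the contractive condition at `(x, u, u)`,
and the rectangle inequality bounds `G(x, Tx, Tx)` by `G(x, u, u) + 2 G(Tx, u, u)`; hence
`G(Tx, u, u) ≤ K G(x, u, u)` with `K = (a + b) / (1 - 2b) < 1`. Convexity then gives
`G(x_{n+1}, u, u) ≤ (1 - (1 - K) α_n) G(x_n, u, u) ≤ exp (-(1 - K) α_n) G(x_n, u, u)`,
and the product of these factors tends to `0` because `∑ α_n = ∞`.
-/

namespace GMetricStruct

variable {X : Type*} (GM : GMetricStruct X)

theorem G_self (x : X) : GM.G x x x = 0 :=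
  GM.eq_zero_of_eq x x x rfl rfl

theorem G_left_le_two_mul (x y : X) : GM.G x x y ≤ 2 * GM.G x y y := by
  have hrect := GM.rect x x y y
  have hcycle : GM.G y x y = GM.G x y y := GM.symm_cycle y x y
  linarith

theorem G_le_add_two_mul (x y u : X) : GM.G x y y ≤ GM.G x u u + 2 * GM.G y u u := by
  have hrect := GM.rect x y y u
  have hcycle : GM.G u y y = GM.G y y u := GM.symm_cycle u y y
  have := GM.G_left_le_two_mul y u
  linarith

theorem G_apply_le_of_isFixedPt {T : X → X} {u : X} (hu : T u = u) {a b c d : ℝ}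
    (hb : 0 ≤ b) (hb2 : 2 * b < 1)
    (hT : ∀ x y z : X, GM.G (T x) (T y) (T z) ≤
      a * GM.G x y z + b * GM.G x (T x) (T x) + c * GM.G y (T y) (T y)
        + d * GM.G z (T z) (T z)) (x : X) :
    GM.G (T x) u u ≤ (a + b) / (1 - 2 * b) * GM.G x u u := by
  have hcontr := hT x u u
  rw [hu, GM.G_self, mul_zero, mul_zero, add_zero, add_zero] at hcontr
  have hdiag := mul_le_mul_of_nonneg_left (GM.G_le_add_two_mul x (T x) u) hb
  rw [div_mul_eq_mul_div, le_div_iff₀ (by linarith)]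
  linarith

end GMetricStruct

theorem IsConvexStructure.G_le {X : Type*} {GM : GMetricStruct X} {W : X → X → ℝ → ℝ → X}
    (hW : IsConvexStructure GM W) {t : ℝ} (ht : t ∈ Set.Icc (0 : ℝ) 1) (x y u v : X) :
    GM.G (W x y (1 - t) t) u v ≤ (1 - t) * GM.G x u v + t * GM.G y u v :=
  hW x y u v (1 - t) t ⟨by linarith [ht.2], by linarith [ht.1]⟩ ht (by ring)

theorem le_mul_exp_neg_sum_of_le_one_sub_mul {g α : ℕ → ℝ} {C : ℝ} (hg : ∀ n, 0 ≤ g n)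
    (hstep : ∀ n, g (n + 1) ≤ (1 - C * α n) * g n) (n : ℕ) :
    g n ≤ g 0 * Real.exp (-(C * ∑ k ∈ Finset.range n, α k)) := by
  induction n with
  | zero => simp
  | succ n ih =>
    have hexp : 1 - C * α n ≤ Real.exp (-(C * α n)) := by
      linarith [Real.add_one_le_exp (-(C * α n))]
    calc g (n + 1) ≤ (1 - C * α n) * g n := hstep n
      _ ≤ Real.exp (-(C * α n)) * (g 0 * Real.exp (-(C * ∑ k ∈ Finset.range n, α k))) :=
          mul_le_mul hexp ih (hg n) (Real.exp_nonneg _)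
      _ = g 0 * Real.exp (-(C * ∑ k ∈ Finset.range (n + 1), α k)) := by
          rw [Finset.sum_range_succ, mul_add, neg_add, Real.exp_add]; ring

theorem tendsto_zero_of_le_one_sub_mul {g α : ℕ → ℝ} {C : ℝ} (hC : 0 < C)
    (hg : ∀ n, 0 ≤ g n) (hstep : ∀ n, g (n + 1) ≤ (1 - C * α n) * g n)
    (hdiv : Tendsto (fun n => ∑ k ∈ Finset.range n, α k) atTop atTop) :
    Tendsto g atTop (𝓝 0) := by
  have hexp : Tendsto (fun n => Real.exp (-(C * ∑ k ∈ Finset.range n, α k))) atTop (𝓝 0) :=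
    Real.tendsto_exp_atBot.comp
      (tendsto_neg_atBot_iff.mpr ((tendsto_const_mul_atTop_of_pos hC).mpr hdiv))
  have hmajorant := hexp.const_mul (g 0)
  rw [mul_zero] at hmajorant
  exact tendsto_of_tendsto_of_tendsto_of_le_of_le tendsto_const_nhds hmajorant hg
    (le_mul_exp_neg_sum_of_le_one_sub_mul hg hstep)

theorem mann_convergence_four_term_general {X : Type*} (GM : GMetricStruct X)
    (W : X → X → ℝ → ℝ → X) (hW : IsConvexStructure GM W)
    (T : X → X) (u : X) (hu : T u = u)
    (a b c d : ℝ) (ha : 0 ≤ a) (hb : 0 ≤ b)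
    (habcd : a + 3 * b < 1)
    (hT : ∀ x y z : X, GM.G (T x) (T y) (T z) ≤
      a * GM.G x y z + b * GM.G x (T x) (T x) + c * GM.G y (T y) (T y)
        + d * GM.G z (T z) (T z))
    (α : ℕ → ℝ) (hα : ∀ n, α n ∈ Set.Icc (0:ℝ) 1)
    (hdiv : Tendsto (fun n => ∑ k ∈ Finset.range n, α k) atTop atTop)
    (x : ℕ → X)
    (hrec : ∀ n, x (n + 1) = W (x n) (T (x n)) (1 - α n) (α n)) :
    Tendsto (fun n => GM.G (x n) u u) atTop (𝓝 0) := by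
  have hb2 : 0 < 1 - 2 * b := by linarith
  set K := (a + b) / (1 - 2 * b)
  have hK : K < 1 := (div_lt_one hb2).mpr (by linarith)
  refine tendsto_zero_of_le_one_sub_mul (C := 1 - K) (by linarith)
    (fun n => GM.nonneg _ _ _) (fun n => ?_) hdiv
  have hcontr := mul_le_mul_of_nonneg_left
    (GM.G_apply_le_of_isFixedPt hu hb (by linarith) hT (x n)) (hα n).1
  calc GM.G (x (n + 1)) u u
      ≤ (1 - α n) * GM.G (x n) u u + α n * GM.G (T (x n)) u u := by
        rw [hrec n]; exact hW.G_le (hα n) _ _ _ _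
    _ ≤ (1 - (1 - K) * α n) * GM.G (x n) u u := by linarith

theorem mann_convergence_four_term {X : Type*} [Nonempty X] (GM : GMetricStruct X)
    (W : X → X → ℝ → ℝ → X) (hW : IsConvexStructure GM W)
    (T : X → X) (u : X) (hu : T u = u)
    (a b c d : ℝ) (ha : 0 ≤ a) (hb : 0 ≤ b) (hc : 0 ≤ c) (hd : 0 ≤ d)
    (habcd : a + 3 * b < 1)
    (hT : ∀ x y z : X, GM.G (T x) (T y) (T z) ≤
      a * GM.G x y z + b * GM.G x (T x) (T x) + c * GM.G y (T y) (T y)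
        + d * GM.G z (T z) (T z))
    (α : ℕ → ℝ) (hα : ∀ n, α n ∈ Set.Icc (0:ℝ) 1)
    (hdiv : Tendsto (fun n => ∑ k ∈ Finset.range n, α k) atTop atTop)
    (x₀ : X) (x : ℕ → X) (hx0 : x 0 = x₀)
    (hrec : ∀ n, x (n + 1) = W (x n) (T (x n)) (1 - α n) (α n)) :
    Tendsto (fun n => GM.G (x n) u u) atTop (𝓝 0) :=
  mann_convergence_four_term_general GM W hW T u hu a b c d ha hb habcd hT α hα hdiv x hrec
end

section
/- Let (X,G) be a G-metric space with a convex structure W, and let T : X → X be a mapping having a fixed point u (Tu = u) such that G(Tx,Ty,Tz) ≤ a·G(x,y,z) + b·(G(x,Tx,Tx) + G(y,Ty,Ty) + G(z,Tz,Tz)) for all x,y,z ∈ X, where a,b are real numbers with 0 < a + 3b < 1 and a,b ≥ 0. Let (α_n) be a sequence in [0,1] with ∑_{n=0}^∞ α_n = ∞, let x_0 ∈ X, and define the Mann iterative process x_{n+1} = W(x_n, T x_n; 1−α_n, α_n). Then G(x_n, u, u) → 0 as n → ∞, i.e. (x_n) converges strongly to the fixed point u of T. -/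
/-!
Putting `y = z = u` in the contractive condition and bounding `G(v, Tv, Tv)` by the rectangle
inequality through `u` gives `G(Tv, u, u) ≤ q · G(v, u, u)` with `q = (a + b) / (1 - 2b) < 1`.
Convexity of `W` then turns each Mann step into `dₙ₊₁ ≤ (1 - (1 - q) αₙ) dₙ` for
`dₙ = G(xₙ, u, u)`, hence `dₙ ≤ d₀ · exp (-(1 - q) ∑_{k<n} αₖ) → 0`.
-/

open Filter Topology

theorem le_mul_exp_neg_sum {d α : ℕ → ℝ} {c : ℝ} (hd : ∀ n, 0 ≤ d n)
    (hstep : ∀ n, d (n + 1) ≤ (1 - c * α n) * d n) (n : ℕ) :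
    d n ≤ d 0 * Real.exp (-(c * ∑ k ∈ Finset.range n, α k)) := by
  induction n with
  | zero => simp
  | succ n ih =>
    have hfactor : 1 - c * α n ≤ Real.exp (-(c * α n)) := by
      linarith [Real.add_one_le_exp (-(c * α n))]
    calc d (n + 1) ≤ (1 - c * α n) * d n := hstep n
      _ ≤ Real.exp (-(c * α n)) * d n := mul_le_mul_of_nonneg_right hfactor (hd n)
      _ ≤ Real.exp (-(c * α n)) * (d 0 * Real.exp (-(c * ∑ k ∈ Finset.range n, α k))) :=
          mul_le_mul_of_nonneg_left ih (Real.exp_pos _).le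
      _ = d 0 * Real.exp (-(c * ∑ k ∈ Finset.range (n + 1), α k)) := by
          rw [Finset.sum_range_succ, mul_add, neg_add, Real.exp_add]
          ring

theorem tendsto_zero_of_succ_le_one_sub_mul {d α : ℕ → ℝ} {c : ℝ} (hc : 0 < c)
    (hd : ∀ n, 0 ≤ d n) (hstep : ∀ n, d (n + 1) ≤ (1 - c * α n) * d n)
    (hdiv : Tendsto (fun n => ∑ k ∈ Finset.range n, α k) atTop atTop) :
    Tendsto d atTop (𝓝 0) := by
  have hexp : Tendsto (fun n => Real.exp (-(c * ∑ k ∈ Finset.range n, α k))) atTop (𝓝 0) :=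
    Real.tendsto_exp_atBot.comp (tendsto_neg_atTop_atBot.comp (hdiv.const_mul_atTop hc))
  exact squeeze_zero hd (le_mul_exp_neg_sum hd hstep) (by simpa using hexp.const_mul (d 0))

namespace GMetricStruct

variable {X : Type*} (GM : GMetricStruct X)

theorem G_le_two_mul (x y : X) : GM.G x y y ≤ 2 * GM.G y x x := by
  have h := GM.rect y y x x
  rw [← GM.symm_cycle x y y, GM.symm_cycle x y x] at h
  linarith

theorem G_map_le_of_isFixedPt {T : X → X} {u : X} (hu : T u = u) {a b : ℝ}
    (hb : 0 ≤ b) (hb2 : 0 < 1 - 2 * b)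
    (hT : ∀ x y z : X, GM.G (T x) (T y) (T z) ≤
      a * GM.G x y z + b * (GM.G x (T x) (T x) + GM.G y (T y) (T y)
        + GM.G z (T z) (T z)))
    (v : X) : GM.G (T v) u u ≤ (a + b) / (1 - 2 * b) * GM.G v u u := by
  have hcond := hT v u u
  rw [hu, GM.G_self, add_zero, add_zero] at hcond
  have hv : GM.G v (T v) (T v) ≤ GM.G v u u + 2 * GM.G (T v) u u :=
    (GM.rect v (T v) (T v) u).trans (by linarith [GM.G_le_two_mul u (T v)])
  rw [div_mul_eq_mul_div, le_div_iff₀ hb2]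
  nlinarith

theorem G_mann_step_le {W : X → X → ℝ → ℝ → X} (hW : IsConvexStructure GM W)
    {T : X → X} {u : X} {q : ℝ} (hq : ∀ v, GM.G (T v) u u ≤ q * GM.G v u u)
    {t : ℝ} (ht : t ∈ Set.Icc (0 : ℝ) 1) (v : X) :
    GM.G (W v (T v) (1 - t) t) u u ≤ (1 - (1 - q) * t) * GM.G v u u := by
  obtain ⟨ht0, ht1⟩ := ht
  have hconv := hW v (T v) u u (1 - t) t ⟨by linarith, by linarith⟩ ⟨ht0, ht1⟩ (by ring)
  have hTv := mul_le_mul_of_nonneg_left (hq v) ht0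
  linarith

end GMetricStruct

theorem mann_convergence_sum_form_general {X : Type*} (GM : GMetricStruct X)
    (W : X → X → ℝ → ℝ → X) (hW : IsConvexStructure GM W)
    (T : X → X) (u : X) (hu : T u = u)
    (a b : ℝ) (ha : 0 ≤ a) (hb : 0 ≤ b)
    (hlt : a + 3 * b < 1)
    (hT : ∀ x y z : X, GM.G (T x) (T y) (T z) ≤
      a * GM.G x y z + b * (GM.G x (T x) (T x) + GM.G y (T y) (T y)
        + GM.G z (T z) (T z)))
    (α : ℕ → ℝ) (hα : ∀ n, α n ∈ Set.Icc (0:ℝ) 1)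
    (hdiv : Tendsto (fun n => ∑ k ∈ Finset.range n, α k) atTop atTop)
    (x : ℕ → X)
    (hrec : ∀ n, x (n + 1) = W (x n) (T (x n)) (1 - α n) (α n)) :
    Tendsto (fun n => GM.G (x n) u u) atTop (𝓝 0) := by
  have hb2 : 0 < 1 - 2 * b := by linarith
  have hq : (a + b) / (1 - 2 * b) < 1 := by
    rw [div_lt_one hb2]
    linarith
  have hcontr := GM.G_map_le_of_isFixedPt hu hb hb2 hT
  refine tendsto_zero_of_succ_le_one_sub_mul (sub_pos.mpr hq) (fun n => GM.nonneg _ _ _)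
    (fun n => ?_) hdiv
  rw [hrec n]
  exact GM.G_mann_step_le hW hcontr (hα n) (x n)

theorem mann_convergence_sum_form {X : Type*} [Nonempty X] (GM : GMetricStruct X)
    (W : X → X → ℝ → ℝ → X) (hW : IsConvexStructure GM W)
    (T : X → X) (u : X) (hu : T u = u)
    (a b : ℝ) (ha : 0 ≤ a) (hb : 0 ≤ b)
    (hpos : 0 < a + 3 * b) (hlt : a + 3 * b < 1)
    (hT : ∀ x y z : X, GM.G (T x) (T y) (T z) ≤
      a * GM.G x y z + b * (GM.G x (T x) (T x) + GM.G y (T y) (T y)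
        + GM.G z (T z) (T z)))
    (α : ℕ → ℝ) (hα : ∀ n, α n ∈ Set.Icc (0:ℝ) 1)
    (hdiv : Tendsto (fun n => ∑ k ∈ Finset.range n, α k) atTop atTop)
    (x₀ : X) (x : ℕ → X) (hx0 : x 0 = x₀)
    (hrec : ∀ n, x (n + 1) = W (x n) (T (x n)) (1 - α n) (α n)) :
    Tendsto (fun n => GM.G (x n) u u) atTop (𝓝 0) :=
  mann_convergence_sum_form_general GM W hW T u hu a b ha hb hlt hT α hα hdiv x hrec
end

section
/- Let (X,G) be a G-metric space and let T : X → X be a mapping with a fixed point u (Tu = u) such that G(Tx,Ty,Tz) ≤ a·G(x,y,z) + b·G(x,Tx,Tx) + c·G(y,Ty,Ty) + d·G(z,Tz,Tz) for all x,y,z ∈ X, where a,b,c,d are nonnegative real numbers with a + 3b < 1. Then for every x ∈ X, G(Tx, u, u) ≤ ((a+b)/(1−2b))·G(x, u, u). -/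
open Filter Topology

/-!
Put `u = y = z` in the contractive condition: since `Tu = u` and `G(u,u,u) = 0`, the `c` and `d`
terms vanish and `G(Tx,u,u) ≤ a G(x,u,u) + b G(x,Tx,Tx)`. The rectangle inequality through `u`
and the standard bound `G(u,Tx,Tx) ≤ 2 G(Tx,u,u)` give `G(x,Tx,Tx) ≤ G(x,u,u) + 2 G(Tx,u,u)`,
and the resulting term `2b G(Tx,u,u)` is absorbed into the left-hand side.
-/

namespace GMetricStruct

variable {X : Type*} (GM : GMetricStruct X)

theorem G_le_div_mul_of_le {a b : ℝ} (hb : 0 ≤ b) (hb2 : 2 * b < 1) {x y u : X}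
    (h : GM.G y u u ≤ a * GM.G x u u + b * GM.G x y y) :
    GM.G y u u ≤ (a + b) / (1 - 2 * b) * GM.G x u u := by
  have hxy : GM.G x y y ≤ GM.G x u u + 2 * GM.G y u u :=
    (GM.rect x y y u).trans (add_le_add_right (GM.G_le_two_mul u y) _)
  rw [div_mul_eq_mul_div, le_div_iff₀ (by linarith)]
  nlinarith [mul_le_mul_of_nonneg_left hxy hb]

end GMetricStruct

theorem key_estimate_four_term_general {X : Type*} (GM : GMetricStruct X)
    (T : X → X) (u : X) (hu : T u = u)
    (a b c d : ℝ) (ha : 0 ≤ a) (hb : 0 ≤ b)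
    (habcd : a + 3 * b < 1)
    (hT : ∀ x y z : X, GM.G (T x) (T y) (T z) ≤
      a * GM.G x y z + b * GM.G x (T x) (T x) + c * GM.G y (T y) (T y)
        + d * GM.G z (T z) (T z)) :
    ∀ x : X, GM.G (T x) u u ≤ ((a + b) / (1 - 2 * b)) * GM.G x u u := by
  intro x
  have hcontr := hT x u u
  rw [hu, GM.G_self, mul_zero, mul_zero, add_zero, add_zero] at hcontr
  exact GM.G_le_div_mul_of_le hb (by linarith) hcontr

theorem key_estimate_four_term {X : Type*} [Nonempty X] (GM : GMetricStruct X)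
    (T : X → X) (u : X) (hu : T u = u)
    (a b c d : ℝ) (ha : 0 ≤ a) (hb : 0 ≤ b) (hc : 0 ≤ c) (hd : 0 ≤ d)
    (habcd : a + 3 * b < 1)
    (hT : ∀ x y z : X, GM.G (T x) (T y) (T z) ≤
      a * GM.G x y z + b * GM.G x (T x) (T x) + c * GM.G y (T y) (T y)
        + d * GM.G z (T z) (T z)) :
    ∀ x : X, GM.G (T x) u u ≤ ((a + b) / (1 - 2 * b)) * GM.G x u u :=
  key_estimate_four_term_general GM T u hu a b c d ha hb habcd hT
end
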